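/- arXiv:2206.08499 — 5 statements merged into one kernel-verified Lean document; each statement's English description precedes it below -/
import Mathlib

section
/- Let A be a finite nonempty set, θ₀ ∈ ℝⁿ, and q : ℝⁿ → A → ℝ with θ ↦ q θ u differentiable at θ₀ for every u ∈ A. Let π_θ be the softmax policy of q and let H(θ) = − Σ_{u ∈ A} π_θ(u) log π_θ(u) denote its Shannon entropy. Then H is differentiable at θ₀ and ∇_θ H(θ₀) = − Σ_{u ∈ A} q θ₀ u · ∇_θ π_θ(u)|_{θ=θ₀}; equivalently, ∇_θ H(θ₀) + Σ_{u ∈ A} q θ₀ u · ∇_θ π_θ(u)|_{θ=θ₀} = 0. -/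
/-!
Writing `Z = ∑ u, exp (q u)`, we have `log π_u = q_u - log Z`, so the entropy equals
`log Z - ∑ u, π_u q_u`. Differentiating, `∇ log Z = ∑ u, π_u ∇q_u` cancels the term
`∑ u, π_u ∇q_u` that the product rule produces from the mean, leaving `-∑ u, q_u ∇π_u`.
-/

noncomputable def softmax {A : Type*} [Fintype A] (x : A → ℝ) (a : A) : ℝ :=
  Real.exp (x a) / ∑ u, Real.exp (x u)

section Softmax

open Real

variable {A : Type*} [Fintype A] [Nonempty A]

lemma sum_exp_pos (x : A → ℝ) : 0 < ∑ u, exp (x u) :=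
  Finset.sum_pos (fun _ _ => exp_pos _) Finset.univ_nonempty

lemma sum_softmax (x : A → ℝ) : ∑ u, softmax x u = 1 := by
  simp only [softmax, ← Finset.sum_div, div_self (sum_exp_pos x).ne']

lemma log_softmax (x : A → ℝ) (a : A) :
    log (softmax x a) = x a - log (∑ u, exp (x u)) := by
  rw [softmax, log_div (exp_ne_zero _) (sum_exp_pos x).ne', log_exp]

lemma entropy_softmax (x : A → ℝ) :
    -∑ u, softmax x u * log (softmax x u) = log (∑ u, exp (x u)) - ∑ u, softmax x u * x u := by
  simp only [log_softmax, mul_sub, Finset.sum_sub_distrib, ← Finset.sum_mul, sum_softmax]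
  ring

variable {E : Type*} [NormedAddCommGroup E] [NormedSpace ℝ E]
  {q : E → A → ℝ} {q' : A → E →L[ℝ] ℝ} {θ₀ : E}

lemma hasFDerivAt_log_sum_exp (hq : ∀ u, HasFDerivAt (fun θ => q θ u) (q' u) θ₀) :
    HasFDerivAt (fun θ => log (∑ u, exp (q θ u))) (∑ u, softmax (q θ₀) u • q' u) θ₀ := by
  convert (HasFDerivAt.fun_sum fun u _ => (hq u).exp).log (sum_exp_pos (q θ₀)).ne' using 1
  simp only [Finset.smul_sum, smul_smul, softmax, div_eq_inv_mul]

lemma differentiableAt_softmax (hq : ∀ u, DifferentiableAt ℝ (fun θ => q θ u) θ₀) (a : A) :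
    DifferentiableAt ℝ (fun θ => softmax (q θ) a) θ₀ :=
  show DifferentiableAt ℝ (fun θ => exp (q θ a) * (∑ u, exp (q θ u))⁻¹) θ₀ from
    (hq a).exp.fun_mul ((DifferentiableAt.fun_sum fun u _ => (hq u).exp).fun_inv
      (sum_exp_pos (q θ₀)).ne')

lemma hasFDerivAt_entropy_softmax (hq : ∀ u, DifferentiableAt ℝ (fun θ => q θ u) θ₀) :
    HasFDerivAt (fun θ => -∑ u, softmax (q θ) u * log (softmax (q θ) u))
      (-∑ u, q θ₀ u • fderiv ℝ (fun θ => softmax (q θ) u) θ₀) θ₀ := by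
  simp only [entropy_softmax]
  have hmean := HasFDerivAt.fun_sum (u := Finset.univ) fun u _ =>
    (differentiableAt_softmax hq u).hasFDerivAt.fun_mul (hq u).hasFDerivAt
  refine ((hasFDerivAt_log_sum_exp fun u => (hq u).hasFDerivAt).sub hmean).congr_fderiv ?_
  rw [Finset.sum_add_distrib]
  abel

end Softmax

lemma gradient_eq_neg_sum_smul_gradient {F ι : Type*} [NormedAddCommGroup F]
    [InnerProductSpace ℝ F] [CompleteSpace F] [Fintype ι] {f : F → ℝ} {g : ι → F → ℝ}
    {c : ι → ℝ} {x : F} (hf : HasFDerivAt f (-∑ i, c i • fderiv ℝ (g i) x) x) :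
    gradient f x = -∑ i, c i • gradient (g i) x := by
  simp only [gradient, hf.fderiv, map_neg, map_sum, map_smul]

/-- The entropy of the softmax policy is differentiable and its gradient equals
minus the "stop-gradient" sum `Σ_u q θ₀ u • ∇_θ π_θ(u)|_{θ₀}`; equivalently the
two add up to zero. -/
theorem softmax_entropy_gradient
    {n : ℕ} {A : Type*} [Fintype A] [Nonempty A]
    (θ₀ : EuclideanSpace ℝ (Fin n))
    (q : EuclideanSpace ℝ (Fin n) → A → ℝ)
    (hq : ∀ u : A, DifferentiableAt ℝ (fun θ => q θ u) θ₀)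
    (π : EuclideanSpace ℝ (Fin n) → A → ℝ)
    (hπ : ∀ θ (a : A), π θ a = Real.exp (q θ a) / ∑ u : A, Real.exp (q θ u))
    (H : EuclideanSpace ℝ (Fin n) → ℝ)
    (hH : ∀ θ, H θ = -∑ u : A, π θ u * Real.log (π θ u)) :
    DifferentiableAt ℝ H θ₀ ∧
    gradient H θ₀ = -∑ u : A, q θ₀ u • gradient (fun θ => π θ u) θ₀ ∧
    gradient H θ₀ + ∑ u : A, q θ₀ u • gradient (fun θ => π θ u) θ₀ = 0 := by
  obtain rfl : π = fun θ => softmax (q θ) := funext₂ hπ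
  obtain rfl : H = fun θ => -∑ u, softmax (q θ) u * Real.log (softmax (q θ) u) := funext hH
  have hH' := hasFDerivAt_entropy_softmax hq
  have hgrad := gradient_eq_neg_sum_smul_gradient hH'
  exact ⟨hH'.differentiableAt, hgrad, by rw [hgrad, neg_add_cancel]⟩
end

section
/- (PPO surrogate gradient.) Let θ₀ ∈ ℝⁿ, p : ℝⁿ → ℝ differentiable at θ₀ with p(θ₀) > 0, let p_b > 0 be a constant, Â ∈ ℝ, and 0 < ε < 1. Set r(θ) = p(θ)/p_b, Δ_O = log(p(θ₀)/p_b), and define J(θ) = min( r(θ)·Â, clip(r(θ), 1−ε, 1+ε)·Â ), where clip(x,l,u) = max(l, min(x,u)). Suppose r(θ₀) ≠ 1+ε and r(θ₀) ≠ 1−ε. Then J is differentiable at θ₀ and ∇_θ J(θ₀) = τ_ε(Δ_O, Â) · e^{Δ_O} · Â · ∇_θ log p(θ)|_{θ₀}, where τ_ε(x,y) = 1 if (y > 0 and x < log(1+ε)) or (y < 0 and x > log(1−ε)), and τ_ε(x,y) = 0 otherwise. -/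
/-!
For `Â ≥ 0` the clipped surrogate, as a function of the ratio `x`, equals `min x (1 + ε) * Â`,
and for `Â ≤ 0` it equals `max x (1 - ε) * Â`. Away from the kinks it is therefore locally
either linear with slope `Â` or constant, and the slope is `Â` exactly when
`τ_ε(log x, Â) = 1`. The chain rule through `r = p / p_b`, together with
`e^{Δ_O} ∇ log p(θ₀) = ∇ p(θ₀) / p_b`, gives the formula.
-/

section Gradient

variable {F : Type*} [NormedAddCommGroup F] [InnerProductSpace ℝ F] [CompleteSpace F]

theorem HasDerivAt.comp_hasGradientAt {f : F → ℝ} {f' x : F} {g : ℝ → ℝ} {g' : ℝ}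
    (hg : HasDerivAt g g' (f x)) (hf : HasGradientAt f f' x) :
    HasGradientAt (g ∘ f) (g' • f') x := by
  rw [hasGradientAt_iff_hasFDerivAt] at hf ⊢
  rw [map_smul]
  exact hg.comp_hasFDerivAt x hf

end Gradient

theorem hasDerivAt_min_const {c x : ℝ} (hx : x ≠ c) :
    HasDerivAt (fun y => min y c) (if x < c then 1 else 0) x := by
  rcases hx.lt_or_gt with hlt | hgt
  · rw [if_pos hlt]
    refine (hasDerivAt_id x).congr_of_eventuallyEq ?_
    filter_upwards [eventually_lt_nhds hlt] with y hy using min_eq_left hy.le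
  · rw [if_neg hgt.not_gt]
    refine (hasDerivAt_const x c).congr_of_eventuallyEq ?_
    filter_upwards [eventually_gt_nhds hgt] with y hy using min_eq_right hy.le

theorem hasDerivAt_max_const {c x : ℝ} (hx : x ≠ c) :
    HasDerivAt (fun y => max y c) (if c < x then 1 else 0) x := by
  rcases hx.lt_or_gt with hlt | hgt
  · rw [if_neg hlt.not_gt]
    refine (hasDerivAt_const x c).congr_of_eventuallyEq ?_
    filter_upwards [eventually_lt_nhds hlt] with y hy using max_eq_right hy.le
  · rw [if_pos hgt]
    refine (hasDerivAt_id x).congr_of_eventuallyEq ?_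
    filter_upwards [eventually_gt_nhds hgt] with y hy using max_eq_left hy.le

section ClipAlgebra

variable {R : Type*} [Ring R] [LinearOrder R] [IsOrderedRing R]

theorem min_mul_clip_mul_of_nonneg {l u A : R} (hlu : l ≤ u) (hA : 0 ≤ A) (x : R) :
    min (x * A) (max l (min x u) * A) = min x u * A := by
  rw [← min_mul_of_nonneg _ _ hA]
  congr 1
  rcases le_total x u with h | h <;> simp [h, hlu]

theorem min_mul_clip_mul_of_nonpos {l u A : R} (hA : A ≤ 0) (x : R) :
    min (x * A) (max l (min x u) * A) = max x l * A := by
  rw [← (antitone_mul_right hA).map_max, max_left_comm, sup_inf_self, max_comm]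

end ClipAlgebra

noncomputable def clippedSurrogate (ε A x : ℝ) : ℝ :=
  min (x * A) (max (1 - ε) (min x (1 + ε)) * A)

theorem hasDerivAt_clippedSurrogate {ε x : ℝ} (A : ℝ) (hε : 0 ≤ ε)
    (hu : x ≠ 1 + ε) (hl : x ≠ 1 - ε) :
    HasDerivAt (clippedSurrogate ε A)
      ((if (0 < A ∧ x < 1 + ε) ∨ (A < 0 ∧ 1 - ε < x) then 1 else 0) * A) x := by
  rcases le_total 0 A with hA | hA
  · rw [show clippedSurrogate ε A = fun y => min y (1 + ε) * A from
      funext (min_mul_clip_mul_of_nonneg (by linarith) hA)]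
    refine ((hasDerivAt_min_const hu).mul_const A).congr_deriv ?_
    rcases hA.eq_or_lt with rfl | hA
    · simp
    · simp [hA, hA.not_gt]
  · rw [show clippedSurrogate ε A = fun y => max y (1 - ε) * A from
      funext (min_mul_clip_mul_of_nonpos hA)]
    refine ((hasDerivAt_max_const hl).mul_const A).congr_deriv ?_
    rcases hA.lt_or_eq with hA | rfl
    · simp [hA, hA.not_gt]
    · simp

/-- PPO surrogate gradient: away from the clipping kinks, the PPO clipped
surrogate objective is differentiable and its gradient equals
`τ_ε(Δ_O, Â) · e^{Δ_O} · Â • ∇ log p(θ)`. -/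
theorem ppo_surrogate_gradient
    {n : ℕ} (θ₀ : EuclideanSpace ℝ (Fin n))
    (p : EuclideanSpace ℝ (Fin n) → ℝ)
    (hp : DifferentiableAt ℝ p θ₀) (hp0 : 0 < p θ₀)
    (pb : ℝ) (hpb : 0 < pb)
    (Ahat ε : ℝ) (hε0 : 0 < ε) (hε1 : ε < 1)
    (r : EuclideanSpace ℝ (Fin n) → ℝ) (hr : ∀ θ, r θ = p θ / pb)
    (ΔO : ℝ) (hΔO : ΔO = Real.log (p θ₀ / pb))
    (clip : ℝ → ℝ → ℝ → ℝ) (hclip : ∀ x l u, clip x l u = max l (min x u))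
    (J : EuclideanSpace ℝ (Fin n) → ℝ)
    (hJ : ∀ θ, J θ = min (r θ * Ahat) (clip (r θ) (1 - ε) (1 + ε) * Ahat))
    (τ : ℝ → ℝ → ℝ)
    (hτ : ∀ x y, τ x y =
      if (0 < y ∧ x < Real.log (1 + ε)) ∨ (y < 0 ∧ Real.log (1 - ε) < x)
      then 1 else 0)
    (hne1 : r θ₀ ≠ 1 + ε) (hne2 : r θ₀ ≠ 1 - ε) :
    DifferentiableAt ℝ J θ₀ ∧
    gradient J θ₀ =
      (τ ΔO Ahat * Real.exp ΔO * Ahat) •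
        gradient (fun θ => Real.log (p θ)) θ₀ := by
  have hr₀ : 0 < r θ₀ := by rw [hr]; positivity
  have hΔr : ΔO = Real.log (r θ₀) := by rw [hΔO, hr]
  have hgrad_p := hp.hasGradientAt
  have hgrad_r : HasGradientAt r ((1 / pb) • gradient p θ₀) θ₀ := by
    rw [show r = (· / pb) ∘ p from funext hr]
    exact ((hasDerivAt_id _).div_const pb).comp_hasGradientAt hgrad_p
  rw [show J = clippedSurrogate ε Ahat ∘ r from funext fun θ => by rw [hJ, hclip]; rfl]
  have hgrad_J := (hasDerivAt_clippedSurrogate Ahat hε0.le hne1 hne2).comp_hasGradientAt hgrad_r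
  have hgrad_log := (Real.hasDerivAt_log hp0.ne').comp_hasGradientAt hgrad_p
  refine ⟨hgrad_J.differentiableAt, ?_⟩
  rw [hgrad_J.gradient, show (fun θ => Real.log (p θ)) = Real.log ∘ p from rfl,
    hgrad_log.gradient, smul_smul, smul_smul, hτ, hΔr, Real.exp_log hr₀]
  simp only [Real.log_lt_log_iff hr₀ (by linarith : (0 : ℝ) < 1 + ε),
    Real.log_lt_log_iff (by linarith : (0 : ℝ) < 1 - ε) hr₀]
  simp only [hr]
  congr 1
  field_simp
end

section
/- (f_MLA satisfies the validity constraints.) Define f_MLA : ℝ × ℝ → ℝ by f_MLA(x,y) = −(1+x)²/2 if 1+x+y ≤ 0 < 1+x, and f_MLA(x,y) = y · max(1 + x + y/2, 0) otherwise. Then: (i) f_MLA(x, 0) = 0 for every x; (ii) for every fixed x, the map y ↦ f_MLA(x,y) is monotone nondecreasing on ℝ; (iii) y · f_MLA(x,y) ≥ 0 for all x, y. -/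
/-!
Write `a = 1 + x`. Both branches of `f_MLA` equal `(g y ^ 2 - a ^ 2) / 2` for
`g y = max (y + a) (max (-a) 0)`, which is nonnegative and nondecreasing in `y`; hence so is
`f_MLA x`. At `y = 0` the first branch cannot occur, so `f_MLA x 0 = 0`, and a nondecreasing
function vanishing at `0` has the sign of its argument.
-/

/-- The numerically stable maximum-likelihood approximation scaling function. -/
noncomputable def fMLA (x y : ℝ) : ℝ :=
  if 1 + x + y ≤ 0 ∧ 0 < 1 + x then -(1 + x) ^ 2 / 2
  else y * max (1 + x + y / 2) 0

theorem Monotone.mul_apply_nonneg_of_map_zero {R : Type*} [Ring R] [LinearOrder R]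
    [IsStrictOrderedRing R] {f : R → R} (hf : Monotone f) (h0 : f 0 = 0) (y : R) :
    0 ≤ y * f y := by
  rcases le_total 0 y with hy | hy
  · exact mul_nonneg hy (h0 ▸ hf hy)
  · exact mul_nonneg_of_nonpos_of_nonpos hy (h0 ▸ hf hy)

theorem fMLA_zero_right (x : ℝ) : fMLA x 0 = 0 := by
  rw [fMLA, if_neg fun h => by linarith [h.1, h.2], zero_mul]

theorem fMLA_eq_sq_sub_sq (x y : ℝ) :
    fMLA x y = (max (y + (1 + x)) (max (-(1 + x)) 0) ^ 2 - (1 + x) ^ 2) / 2 := by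
  unfold fMLA
  generalize 1 + x = a
  split_ifs with h
  · rw [max_eq_right (by linarith : -a ≤ 0), max_eq_right (by linarith : y + a ≤ 0)]
    ring
  · rcases le_or_gt a 0 with ha | ha
    · rw [max_eq_left (neg_nonneg.2 ha)]
      rcases le_total (a + y / 2) 0 with hy | hy
      · rw [max_eq_right hy, max_eq_right (by linarith : y + a ≤ -a)]
        ring
      · rw [max_eq_left hy, max_eq_left (by linarith : -a ≤ y + a)]
        ring
    · have hya : 0 < a + y := by
        by_contra! hc
        exact h ⟨hc, ha⟩
      rw [max_eq_right (by linarith : -a ≤ 0), max_eq_left (by linarith : 0 ≤ y + a),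
        max_eq_left (by linarith : 0 ≤ a + y / 2)]
      ring

theorem fMLA_monotone (x : ℝ) : Monotone (fMLA x) := by
  intro y₁ y₂ hy
  simp only [fMLA_eq_sq_sub_sq]
  gcongr

/-- `f_MLA` satisfies the validity constraints on the return-error argument:
it vanishes at `y = 0`, is nondecreasing in `y`, and `y · f_MLA(x,y) ≥ 0`. -/
theorem fMLA_valid :
    (∀ x : ℝ, fMLA x 0 = 0) ∧
    (∀ x : ℝ, Monotone fun y => fMLA x y) ∧
    (∀ x y : ℝ, 0 ≤ y * fMLA x y) :=
  ⟨fMLA_zero_right, fMLA_monotone,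
    fun x => (fMLA_monotone x).mul_apply_nonneg_of_map_zero (fMLA_zero_right x)⟩
end

section
/- (f_MLA monotone in the off-policy argument.) Define f_MLA : ℝ × ℝ → ℝ by f_MLA(x,y) = −(1+x)²/2 if 1+x+y ≤ 0 < 1+x, and f_MLA(x,y) = y · max(1 + x + y/2, 0) otherwise. Then for every fixed y ∈ ℝ, the map x ↦ |f_MLA(x,y)| is monotone nondecreasing on ℝ. Equivalently: if y ≥ 0 then x ↦ f_MLA(x,y) is nondecreasing and nonnegative, and if y ≤ 0 then x ↦ f_MLA(x,y) is nonincreasing and nonpositive. -/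
section AbsMonotone

variable {α β : Type*} [Preorder α] [AddCommGroup β] [LinearOrder β] [IsOrderedAddMonoid β]
  {f : α → β}

theorem Monotone.abs_of_nonneg (hf : Monotone f) (h0 : ∀ x, 0 ≤ f x) :
    Monotone fun x => |f x| := by
  simpa only [_root_.abs_of_nonneg (h0 _)] using hf

theorem Antitone.abs_of_nonpos (hf : Antitone f) (h0 : ∀ x, f x ≤ 0) :
    Monotone fun x => |f x| := by
  simpa only [_root_.abs_of_nonpos (h0 _)] using hf.neg

end AbsMonotone

namespace fMLA

variable {x y : ℝ}

theorem eq_of_nonneg (hy : 0 ≤ y) : fMLA x y = y * max (1 + x + y / 2) 0 :=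
  if_neg fun h => by linarith [h.1, h.2]

theorem eq_of_add_add_nonpos (hx : 1 + x + y ≤ 0) :
    fMLA x y = -max (1 + x) 0 ^ 2 / 2 := by
  unfold fMLA
  rcases lt_or_ge 0 (1 + x) with hpos | hnonpos
  · rw [if_pos ⟨hx, hpos⟩, max_eq_left hpos.le]
  · rw [if_neg fun h => (h.2.not_ge hnonpos), max_eq_right hnonpos,
      max_eq_right (by linarith)]
    ring

theorem eq_of_nonpos_of_add_add_nonneg (hy : y ≤ 0) (hx : 0 ≤ 1 + x + y) :
    fMLA x y = y * (1 + x + y / 2) := by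
  unfold fMLA
  split_ifs with h
  · have hkink : 1 + x = -y := by linarith [h.1]
    rw [hkink]
    ring
  · rw [max_eq_left (by linarith)]

theorem monotone_of_nonneg (hy : 0 ≤ y) : Monotone fun x => fMLA x y := by
  intro a b hab
  simp only [eq_of_nonneg hy]
  gcongr

theorem nonneg_of_nonneg (hy : 0 ≤ y) (x : ℝ) : 0 ≤ fMLA x y := by
  rw [eq_of_nonneg hy]
  exact mul_nonneg hy (le_max_right _ _)

theorem antitone_of_nonpos (hy : y ≤ 0) : Antitone fun x => fMLA x y := by
  refine AntitoneOn.Iic_union_Ici (a := -1 - y) ?_ ?_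
  · intro a ha b hb hab
    simp only [Set.mem_Iic] at ha hb ⊢
    rw [eq_of_add_add_nonpos (by linarith), eq_of_add_add_nonpos (by linarith)]
    gcongr
  · intro a ha b hb hab
    simp only [Set.mem_Ici] at ha hb ⊢
    rw [eq_of_nonpos_of_add_add_nonneg hy (by linarith),
      eq_of_nonpos_of_add_add_nonneg hy (by linarith)]
    exact mul_le_mul_of_nonpos_left (by linarith) hy

theorem nonpos_of_nonpos (hy : y ≤ 0) (x : ℝ) : fMLA x y ≤ 0 := by
  rcases le_total (1 + x + y) 0 with hx | hx
  · rw [eq_of_add_add_nonpos hx]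
    linarith [sq_nonneg (max (1 + x) 0)]
  · rw [eq_of_nonpos_of_add_add_nonneg hy hx]
    exact mul_nonpos_of_nonpos_of_nonneg hy (by linarith)

end fMLA

/-- `f_MLA` is monotone in the off-policy argument: for fixed `y`,
`x ↦ |f_MLA(x,y)|` is nondecreasing; equivalently, for `y ≥ 0` the map
`x ↦ f_MLA(x,y)` is nondecreasing and nonnegative, and for `y ≤ 0` it is
nonincreasing and nonpositive. -/
theorem fMLA_monotone_offpolicy :
    (∀ y : ℝ, Monotone fun x => |fMLA x y|) ∧
    (∀ y : ℝ, 0 ≤ y →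
      (Monotone fun x => fMLA x y) ∧ ∀ x : ℝ, 0 ≤ fMLA x y) ∧
    (∀ y : ℝ, y ≤ 0 →
      (Antitone fun x => fMLA x y) ∧ ∀ x : ℝ, fMLA x y ≤ 0) := by
  refine ⟨fun y => ?_, fun y hy => ⟨fMLA.monotone_of_nonneg hy, fMLA.nonneg_of_nonneg hy⟩,
    fun y hy => ⟨fMLA.antitone_of_nonpos hy, fMLA.nonpos_of_nonpos hy⟩⟩
  rcases le_total 0 y with hy | hy
  · exact (fMLA.monotone_of_nonneg hy).abs_of_nonneg (fMLA.nonneg_of_nonneg hy)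
  · exact (fMLA.antitone_of_nonpos hy).abs_of_nonpos (fMLA.nonpos_of_nonpos hy)
end

section
/- (Monotonicity characterization of the unfixed approximation.) Define f₀(x,y) = y · max(1 + x + y/2, 0). Then for each fixed x ∈ ℝ, the map y ↦ f₀(x,y) is monotone nondecreasing on ℝ if and only if 1 + x ≤ 0. In particular, if 1 + x > 0 then there exist y₁ < y₂ with f₀(x, y₁) > f₀(x, y₂). -/
noncomputable def f0 (x y : ℝ) : ℝ := y * max (1 + x + y / 2) 0

lemma f0_eq_zero_of_nonpos {x y : ℝ} (h : 1 + x + y / 2 ≤ 0) : f0 x y = 0 := by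
  rw [f0, max_eq_right h, mul_zero]

lemma f0_eq_of_nonneg {x y : ℝ} (h : 0 ≤ 1 + x + y / 2) : f0 x y = y * (1 + x + y / 2) := by
  rw [f0, max_eq_left h]

/- On the branch where the max is active, `f0 x` is the parabola `y * (1 + x + y / 2)`, with
roots `0` and `-2 * (1 + x)` and vertex `-(1 + x)`; for `1 + x > 0` the stretch from the root to
the vertex lies on that branch and the parabola decreases there. -/
lemma exists_f0_lt_of_pos {x : ℝ} (h : 0 < 1 + x) :
    ∃ y₁ y₂ : ℝ, y₁ < y₂ ∧ f0 x y₂ < f0 x y₁ := by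
  refine ⟨-2 * (1 + x), -(1 + x), by linarith, ?_⟩
  rw [f0_eq_zero_of_nonpos (y := -2 * (1 + x)) (by linarith),
    f0_eq_of_nonneg (y := -(1 + x)) (by linarith)]
  nlinarith

lemma monotone_f0_of_nonpos {x : ℝ} (h : 1 + x ≤ 0) : Monotone (f0 x) := by
  intro y₁ y₂ hy
  rcases le_or_gt (1 + x + y₁ / 2) 0 with h₁ | h₁
  · rw [f0_eq_zero_of_nonpos h₁]
    rcases le_or_gt (1 + x + y₂ / 2) 0 with h₂ | h₂
    · rw [f0_eq_zero_of_nonpos h₂]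
    · rw [f0_eq_of_nonneg h₂.le]
      have hy₂ : 0 < y₂ := by linarith
      positivity
  · have h₂ : 0 < 1 + x + y₂ / 2 := by linarith
    have hy₁ : 0 < y₁ := by linarith
    rw [f0_eq_of_nonneg h₁.le, f0_eq_of_nonneg h₂.le]
    calc y₁ * (1 + x + y₁ / 2) = y₂ * (1 + x + y₂ / 2) - (y₂ - y₁) * (1 + x + (y₁ + y₂) / 2) := by
          ring
      _ ≤ y₂ * (1 + x + y₂ / 2) := by
          have : 0 ≤ (y₂ - y₁) * (1 + x + (y₁ + y₂) / 2) :=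
            mul_nonneg (by linarith) (by linarith)
          linarith

/-- Monotonicity characterization of the unfixed approximation
`f₀(x,y) = y · max (1 + x + y/2) 0`: it is nondecreasing in `y` iff `1 + x ≤ 0`;
in particular when `1 + x > 0` monotonicity fails at some pair `y₁ < y₂`. -/
theorem f0_monotone_iff (x : ℝ) :
    ((Monotone fun y : ℝ => y * max (1 + x + y / 2) 0) ↔ 1 + x ≤ 0) ∧
    (0 < 1 + x → ∃ y₁ y₂ : ℝ, y₁ < y₂ ∧
      y₂ * max (1 + x + y₂ / 2) 0 < y₁ * max (1 + x + y₁ / 2) 0) := by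
  refine ⟨⟨fun hmono => ?_, monotone_f0_of_nonpos⟩, exists_f0_lt_of_pos⟩
  by_contra! hpos
  obtain ⟨y₁, y₂, hlt, hf⟩ := exists_f0_lt_of_pos hpos
  exact (hmono hlt.le).not_gt hf
end
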